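/- arXiv:1404.2394 — 3 statements merged into one kernel-verified Lean document; each statement's English description precedes it below -/
import Mathlib

section
/- For the one-sided full shift σ on Σ₂ = {0,1}^ℕ, the preimage entropy dimension D_pre(σ) = 1. More precisely, D_pre(s,σ) = +∞ for s < 1, D_pre(1,σ) = log 2, and D_pre(s,σ) = 0 for s > 1. -/
open Filter Set
open scoped ENNReal

variable {X : Type*}

/-- The Bowen metric `d_{T,n}(x,y) = max_{0 ≤ j < n} d(T^j x, T^j y)`. -/
noncomputable def bowenDist [PseudoMetricSpace X] (T : X → X) (n : ℕ) (x y : X) : ℝ :=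
  ⨆ j : Fin n, dist (T^[(j : ℕ)] x) (T^[(j : ℕ)] y)

/-- `E` is an `(n,ε,K,T)`-separated set. -/
def IsPreSeparated [PseudoMetricSpace X] (T : X → X) (n : ℕ) (ε : ℝ) (K : Set X)
    (E : Set X) : Prop :=
  E ⊆ K ∧ ∀ x ∈ E, ∀ y ∈ E, x ≠ y → ε < bowenDist T n x y

/-- `E` is an `(n,ε,K,T)`-spanning set. -/
def IsPreSpanning [PseudoMetricSpace X] (T : X → X) (n : ℕ) (ε : ℝ) (K : Set X)
    (E : Set X) : Prop :=
  E ⊆ K ∧ ∀ x ∈ K, ∃ y ∈ E, bowenDist T n x y ≤ ε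

/-- `r(n,ε,K,T)`: maximal cardinality of an `(n,ε,K,T)`-separated set. -/
noncomputable def sepMax [PseudoMetricSpace X] (T : X → X) (n : ℕ) (ε : ℝ) (K : Set X) : ℝ≥0∞ :=
  ⨆ (E : Finset X) (_ : IsPreSeparated T n ε K ↑E), (E.card : ℝ≥0∞)

/-- `s(n,ε,K,T)`: minimal cardinality of an `(n,ε,K,T)`-spanning set. -/
noncomputable def spanMin [PseudoMetricSpace X] (T : X → X) (n : ℕ) (ε : ℝ) (K : Set X) : ℝ≥0∞ :=
  ⨅ (E : Finset X) (_ : IsPreSpanning T n ε K ↑E), (E.card : ℝ≥0∞)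

/-- The `s`-preimage entropy
`D_pre(s,T) = lim_{ε→0} limsup_n (1/n^s) log sup_{x ∈ X, k ≥ n} r(n,ε,T^{-k}(x),T)`,
where the (monotone) limit as `ε → 0` is expressed as a supremum over `ε > 0`. -/
noncomputable def preEnt [PseudoMetricSpace X] (T : X → X) (s : ℝ) : EReal :=
  ⨆ (ε : ℝ) (_ : 0 < ε), Filter.atTop.limsup fun n : ℕ =>
    (((((n : ℝ) ^ s)⁻¹ : ℝ) : EReal)) *
      ENNReal.log (⨆ (x : X) (k : ℕ) (_ : n ≤ k), sepMax T n ε (T^[k] ⁻¹' {x}))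

/-- The preimage entropy `h_pre(T)`. -/
noncomputable def preimageEntropy [PseudoMetricSpace X] (T : X → X) : EReal := preEnt T 1

/-- The preimage entropy dimension `D_pre(T) = inf {s > 0 : D_pre(s,T) = 0}`. -/
noncomputable def preDim [PseudoMetricSpace X] (T : X → X) : ℝ≥0∞ :=
  ⨅ (s : ℝ) (_ : 0 < s ∧ preEnt T s = 0), ENNReal.ofReal s


/-- The one-sided full 2-shift space `Σ₂ = {0,1}^ℕ`. -/
abbrev Sigma2 : Type := ℕ → Fin 2

private lemma sigma2_summable (x y : Sigma2) :
    Summable fun n : ℕ => ((if x n = y n then 0 else 1) / 2 ^ n : ℝ) := by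
  refine Summable.of_nonneg_of_le (fun n => by positivity) (fun n => ?_) summable_geometric_two
  calc ((if x n = y n then 0 else 1) / 2 ^ n : ℝ) ≤ 1 / 2 ^ n := by
        gcongr
        · split <;> norm_num
    _ = (1 / 2) ^ n := by rw [div_pow, one_pow]

/-- The metric `ρ(x,y) = Σ_n d(x_n,y_n)/2^n`. -/
noncomputable instance Sigma2.metricSpace : MetricSpace Sigma2 where
  dist x y := ∑' n : ℕ, (if x n = y n then 0 else 1) / 2 ^ n
  dist_self x := by simp
  dist_comm x y := by
    show (∑' n : ℕ, (if x n = y n then 0 else 1) / 2 ^ n) =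
        ∑' n : ℕ, (if y n = x n then 0 else 1) / 2 ^ n
    refine tsum_congr fun n => ?_
    by_cases h : x n = y n
    · rw [if_pos h, if_pos h.symm]
    · rw [if_neg h, if_neg fun h' => h h'.symm]
  dist_triangle x y z := by
    show (∑' n : ℕ, ((if x n = z n then 0 else 1) / 2 ^ n : ℝ)) ≤
        (∑' n : ℕ, ((if x n = y n then 0 else 1) / 2 ^ n : ℝ)) +
        ∑' n : ℕ, ((if y n = z n then 0 else 1) / 2 ^ n : ℝ)
    rw [← Summable.tsum_add (sigma2_summable x y) (sigma2_summable y z)]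
    refine Summable.tsum_le_tsum (fun n => ?_) (sigma2_summable x z)
      ((sigma2_summable x y).add (sigma2_summable y z))
    by_cases h : x n = z n
    · rw [if_pos h, zero_div]
      positivity
    · rw [if_neg h]
      by_cases h1 : x n = y n
      · rw [if_pos h1, if_neg fun h2 => h (h1.trans h2)]
        simp
      · rw [if_neg h1]
        have h2 : (0 : ℝ) ≤ (if y n = z n then 0 else 1) / 2 ^ n := by positivity
        linarith
  eq_of_dist_eq_zero := by
    intro x y h
    funext n
    by_contra hne
    have hle : ((if x n = y n then 0 else 1) / 2 ^ n : ℝ) ≤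
        ∑' m : ℕ, ((if x m = y m then 0 else 1) / 2 ^ m : ℝ) :=
      Summable.le_tsum (sigma2_summable x y) n fun m _ => by positivity
    rw [if_neg hne] at hle
    have h0 : (∑' m : ℕ, ((if x m = y m then 0 else 1) / 2 ^ m : ℝ)) = 0 := h
    rw [h0] at hle
    have hpos : (0 : ℝ) < 1 / 2 ^ n := by positivity
    exact absurd hle (not_le.mpr hpos)

/-- The one-sided shift map. -/
def shiftMap : Sigma2 → Sigma2 := fun x n => x (n + 1)

/-!
For `k ≥ n` the fibre `σ^{-k}(x)` leaves the first `k` coordinates free. Prescribing the first `n`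
of them gives `2^n` points of the fibre at mutual Bowen distance `≥ 1`; conversely, two points at
Bowen distance `> ε ≥ 2^{-M}` must differ among their first `n + M` coordinates. Hence
`2^n ≤ sup_{x, k ≥ n} r(n,ε,σ^{-k}(x),σ) ≤ 2^{n+M}`, so its logarithm is `n log 2 + O(1)` and
dividing by `n^s` gives `∞`, `log 2` or `0` according as `s < 1`, `s = 1` or `s > 1`.
-/

open scoped Topology

lemma shiftMap_iterate_apply (k : ℕ) (x : Sigma2) (m : ℕ) : shiftMap^[k] x m = x (m + k) := by
  induction k generalizing x with
  | zero => rfl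
  | succ k ih => rw [Function.iterate_succ_apply, ih]; rfl

lemma Sigma2.dist_eq (x y : Sigma2) :
    dist x y = ∑' n : ℕ, ((if x n = y n then 0 else 1) / 2 ^ n : ℝ) := rfl

lemma Sigma2.one_le_dist {x y : Sigma2} (h : x 0 ≠ y 0) : 1 ≤ dist x y := by
  rw [Sigma2.dist_eq]
  simpa [h] using (sigma2_summable x y).le_tsum 0 fun m _ => by positivity

lemma Sigma2.dist_le_of_eqOn_lt {x y : Sigma2} {M : ℕ} (h : ∀ i < M, x i = y i) :
    dist x y ≤ 2 * (1 / 2) ^ M := by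
  have hgeom : Summable fun i : ℕ => ((1 : ℝ) / 2) ^ (i + M) :=
    summable_geometric_two.comp_injective (add_left_injective M)
  have hhead : ∑ i ∈ Finset.range M, ((if x i = y i then 0 else 1) / 2 ^ i : ℝ) = 0 :=
    Finset.sum_eq_zero fun i hi => by simp [h i (Finset.mem_range.mp hi)]
  rw [Sigma2.dist_eq, ← (sigma2_summable x y).sum_add_tsum_nat_add M, hhead, zero_add]
  calc ∑' i : ℕ, ((if x (i + M) = y (i + M) then 0 else 1) / 2 ^ (i + M) : ℝ)
      ≤ ∑' i : ℕ, ((1 : ℝ) / 2) ^ (i + M) := by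
        refine ((sigma2_summable x y).comp_injective (add_left_injective M)).tsum_le_tsum
          (fun i => ?_) hgeom
        rw [div_pow, one_pow]
        gcongr
        split <;> norm_num
    _ = 2 * (1 / 2) ^ M := by
        simp_rw [pow_add]
        rw [tsum_mul_right, tsum_geometric_two]

lemma one_le_bowenDist_shiftMap {x y : Sigma2} {n i : ℕ} (hi : i < n) (h : x i ≠ y i) :
    1 ≤ bowenDist shiftMap n x y := by
  refine le_trans ?_ (le_ciSup (Set.finite_range _).bddAbove (⟨i, hi⟩ : Fin n))
  exact Sigma2.one_le_dist (by simpa [shiftMap_iterate_apply] using h)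

lemma bowenDist_shiftMap_le {x y : Sigma2} {n M : ℕ} (h : ∀ i < n + M, x i = y i) :
    bowenDist shiftMap n x y ≤ (1 / 2) ^ M := by
  refine Real.iSup_le (fun j => ?_) (by positivity)
  have hagree : ∀ i < n + M - j, shiftMap^[j] x i = shiftMap^[j] y i := fun i hi => by
    rw [shiftMap_iterate_apply, shiftMap_iterate_apply]
    exact h _ (by omega)
  calc dist (shiftMap^[j] x) (shiftMap^[j] y) ≤ 2 * (1 / 2) ^ (n + M - j) :=
        Sigma2.dist_le_of_eqOn_lt hagree
    _ ≤ 2 * (1 / 2) ^ (M + 1) := by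
        gcongr 2 * ?_
        exact pow_le_pow_of_le_one (by norm_num) (by norm_num) (by omega)
    _ = (1 / 2) ^ M := by ring

lemma card_le_sepMax [PseudoMetricSpace X] {T : X → X} {n : ℕ} {ε : ℝ} {K : Set X}
    {E : Finset X} (hE : IsPreSeparated T n ε K E) : (E.card : ℝ≥0∞) ≤ sepMax T n ε K :=
  le_iSup₂ (f := fun (E : Finset X) (_ : IsPreSeparated T n ε K E) => (E.card : ℝ≥0∞)) E hE

/-- The point `w₀ … w_{n-1} 0 … 0 x₀ x₁ …`, with `x` starting at coordinate `k`. -/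
def Sigma2.prependWord (n k : ℕ) (w : Fin n → Fin 2) (x : Sigma2) : Sigma2 :=
  fun i => if h : i < n then w ⟨i, h⟩ else if i < k then 0 else x (i - k)

lemma Sigma2.prependWord_apply_of_lt {n k : ℕ} (w : Fin n → Fin 2) (x : Sigma2) {i : ℕ}
    (hi : i < n) : Sigma2.prependWord n k w x i = w ⟨i, hi⟩ := dif_pos hi

lemma shiftMap_iterate_prependWord {n k : ℕ} (hk : n ≤ k) (w : Fin n → Fin 2) (x : Sigma2) :
    shiftMap^[k] (Sigma2.prependWord n k w x) = x := by
  funext m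
  rw [shiftMap_iterate_apply, Sigma2.prependWord, dif_neg (by omega), if_neg (by omega),
    Nat.add_sub_cancel]

lemma two_pow_le_sepMax_shiftMap {n k : ℕ} (hk : n ≤ k) (x : Sigma2) {ε : ℝ} (hε : ε < 1) :
    2 ^ n ≤ sepMax shiftMap n ε (shiftMap^[k] ⁻¹' {x}) := by
  classical
  have hinj : Function.Injective fun w => Sigma2.prependWord n k w x := fun w w' h => by
    funext i
    simpa [Sigma2.prependWord_apply_of_lt] using congrFun h i
  have hsep : IsPreSeparated shiftMap n ε (shiftMap^[k] ⁻¹' {x})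
      (Finset.univ.image fun w => Sigma2.prependWord n k w x : Finset Sigma2) := by
    simp only [IsPreSeparated, Finset.coe_image, Finset.coe_univ, Set.image_univ,
      Set.forall_mem_range]
    refine ⟨Set.range_subset_iff.mpr fun w => shiftMap_iterate_prependWord hk w x,
      fun w w' hne => ?_⟩
    obtain ⟨j, hj⟩ := Function.ne_iff.mp fun h : w = w' => hne (by rw [h])
    refine hε.trans_le (one_le_bowenDist_shiftMap j.isLt ?_)
    rwa [Sigma2.prependWord_apply_of_lt, Sigma2.prependWord_apply_of_lt]
  calc (2 ^ n : ℝ≥0∞) = (Finset.univ.image fun w => Sigma2.prependWord n k w x).card := by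
        simp [Finset.card_image_of_injective _ hinj]
    _ ≤ _ := card_le_sepMax hsep

lemma sepMax_shiftMap_le {n M : ℕ} {ε : ℝ} (hε : (1 / 2 : ℝ) ^ M ≤ ε) (K : Set Sigma2) :
    sepMax shiftMap n ε K ≤ 2 ^ (n + M) := by
  refine iSup₂_le fun E hE => ?_
  have hinj : Set.InjOn (fun (y : Sigma2) (i : Fin (n + M)) => y i) E := fun y hy z hz hyz => by
    by_contra hne
    refine (hE.2 y hy z hz hne).not_ge (le_trans (bowenDist_shiftMap_le fun i hi => ?_) hε)
    exact congrFun hyz ⟨i, hi⟩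
  calc (E.card : ℝ≥0∞) ≤ (Finset.univ : Finset (Fin (n + M) → Fin 2)).card := by
        exact_mod_cast Finset.card_le_card_of_injOn _ (fun _ _ => Finset.mem_coe.mpr
          (Finset.mem_univ _)) hinj
    _ = 2 ^ (n + M) := by simp

/-- `sup_{x, k ≥ n} r(n,ε,T^{-k}(x),T)` -/
noncomputable def preSepSup [PseudoMetricSpace X] (T : X → X) (ε : ℝ) (n : ℕ) : ℝ≥0∞ :=
  ⨆ (x : X) (k : ℕ) (_ : n ≤ k), sepMax T n ε (T^[k] ⁻¹' {x})

lemma preEnt_eq_iSup_limsup [PseudoMetricSpace X] (T : X → X) (s : ℝ) :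
    preEnt T s = ⨆ (ε : ℝ) (_ : 0 < ε), atTop.limsup fun n : ℕ =>
      ((((n : ℝ) ^ s)⁻¹ : ℝ) : EReal) * ENNReal.log (preSepSup T ε n) := rfl

lemma two_pow_le_preSepSup_shiftMap {ε : ℝ} (hε : ε < 1) (n : ℕ) :
    2 ^ n ≤ preSepSup shiftMap ε n :=
  le_iSup₂_of_le (fun _ => 0) n <| le_iSup_of_le le_rfl <|
    two_pow_le_sepMax_shiftMap le_rfl _ hε

lemma preSepSup_shiftMap_le {ε : ℝ} {M : ℕ} (hε : (1 / 2 : ℝ) ^ M ≤ ε) (n : ℕ) :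
    preSepSup shiftMap ε n ≤ 2 ^ (n + M) :=
  iSup₂_le fun _ _ => iSup_le fun _ => sepMax_shiftMap_le hε _

lemma ENNReal.log_two_pow (j : ℕ) : ENNReal.log (2 ^ j) = ((j * Real.log 2 : ℝ) : EReal) := by
  rw [ENNReal.log_pow, EReal.coe_mul, show (2 : ℝ≥0∞) = ENNReal.ofReal 2 by simp,
    ENNReal.log_ofReal_of_pos two_pos]
  rfl

lemma limsup_inv_rpow_mul_log_le {a : ℕ → ℝ≥0∞} {M : ℕ} (ha : ∀ n, a n ≤ 2 ^ (n + M))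
    {s c : ℝ} (hc : Tendsto (fun n : ℕ => ((n : ℝ) ^ s)⁻¹ * ((n + M) * Real.log 2)) atTop (𝓝 c)) :
    atTop.limsup (fun n : ℕ => ((((n : ℝ) ^ s)⁻¹ : ℝ) : EReal) * ENNReal.log (a n)) ≤ c := by
  rw [← (EReal.tendsto_coe.mpr hc).limsup_eq]
  refine limsup_le_limsup (Eventually.of_forall fun n => ?_)
  calc ((((n : ℝ) ^ s)⁻¹ : ℝ) : EReal) * ENNReal.log (a n)
      ≤ ((((n : ℝ) ^ s)⁻¹ : ℝ) : EReal) * ENNReal.log (2 ^ (n + M)) := by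
        gcongr
        exact ha n
    _ = _ := by rw [ENNReal.log_two_pow]; push_cast; rfl

lemma le_liminf_inv_rpow_mul_log {a : ℕ → ℝ≥0∞} (ha : ∀ n, 2 ^ n ≤ a n) {s : ℝ} {c : EReal}
    (hc : Tendsto (fun n : ℕ => ((((n : ℝ) ^ s)⁻¹ * (n * Real.log 2) : ℝ) : EReal)) atTop (𝓝 c)) :
    c ≤ atTop.liminf (fun n : ℕ => ((((n : ℝ) ^ s)⁻¹ : ℝ) : EReal) * ENNReal.log (a n)) := by
  rw [← hc.liminf_eq]
  refine liminf_le_liminf (Eventually.of_forall fun n => ?_)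
  calc ((((n : ℝ) ^ s)⁻¹ * (n * Real.log 2) : ℝ) : EReal)
      = ((((n : ℝ) ^ s)⁻¹ : ℝ) : EReal) * ENNReal.log (2 ^ n) := by
        rw [ENNReal.log_two_pow, EReal.coe_mul]
    _ ≤ _ := by
        gcongr
        exact ha n

lemma tendsto_inv_rpow_mul_add_of_one_lt {s : ℝ} (hs : 1 < s) (M : ℕ) :
    Tendsto (fun n : ℕ => ((n : ℝ) ^ s)⁻¹ * ((n + M) * Real.log 2)) atTop (𝓝 0) := by
  have hlim : Tendsto (fun n : ℕ => ((n : ℝ) ^ (-(s - 1)) + M * (n : ℝ) ^ (-s)) * Real.log 2)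
      atTop (𝓝 ((0 + M * 0) * Real.log 2)) :=
    (((tendsto_rpow_neg_atTop (by linarith)).add (tendsto_const_nhds.mul
      (tendsto_rpow_neg_atTop (by linarith)))).comp tendsto_natCast_atTop_atTop).mul_const _
  rw [show ((0 : ℝ) + M * 0) * Real.log 2 = 0 by ring] at hlim
  refine hlim.congr' ((eventually_gt_atTop 0).mono fun n hn => ?_)
  have hn : (0 : ℝ) < n := Nat.cast_pos.mpr hn
  simp only [Real.rpow_neg hn.le, Real.rpow_sub_one hn.ne']
  field_simp

lemma tendsto_inv_rpow_one_mul_add (M : ℕ) :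
    Tendsto (fun n : ℕ => ((n : ℝ) ^ (1 : ℝ))⁻¹ * ((n + M) * Real.log 2)) atTop
      (𝓝 (Real.log 2)) := by
  have hlim : Tendsto (fun n : ℕ => (1 + M * (n : ℝ)⁻¹) * Real.log 2) atTop
      (𝓝 ((1 + M * 0) * Real.log 2)) :=
    ((tendsto_const_nhds.add (tendsto_const_nhds.mul tendsto_inv_atTop_nhds_zero_nat)).mul_const _)
  rw [show ((1 : ℝ) + M * 0) * Real.log 2 = Real.log 2 by ring] at hlim
  refine hlim.congr' ((eventually_gt_atTop 0).mono fun n hn => ?_)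
  have hn : (n : ℝ) ≠ 0 := Nat.cast_ne_zero.mpr hn.ne'
  simp only [Real.rpow_one]
  field_simp

lemma tendsto_inv_rpow_mul_of_lt_one {s : ℝ} (hs : s < 1) :
    Tendsto (fun n : ℕ => ((((n : ℝ) ^ s)⁻¹ * (n * Real.log 2) : ℝ) : EReal)) atTop (𝓝 ⊤) := by
  refine EReal.tendsto_coe_atTop.comp (Tendsto.congr' ?_ ((((tendsto_rpow_atTop
    (by linarith : 0 < 1 - s)).comp tendsto_natCast_atTop_atTop).atTop_mul_const
      (Real.log_pos one_lt_two))))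
  refine (eventually_gt_atTop 0).mono fun n hn => ?_
  have hn : (0 : ℝ) < n := Nat.cast_pos.mpr hn
  simp only [Function.comp_apply, Real.rpow_sub hn, Real.rpow_one]
  ring

lemma preEnt_shiftMap_of_lt_one {s : ℝ} (hs : s < 1) : preEnt shiftMap s = ⊤ := by
  rw [preEnt_eq_iSup_limsup, eq_top_iff]
  refine le_iSup₂_of_le (1 / 2) (by norm_num) (le_trans ?_ liminf_le_limsup)
  exact le_liminf_inv_rpow_mul_log (two_pow_le_preSepSup_shiftMap (by norm_num))
    (tendsto_inv_rpow_mul_of_lt_one hs)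

lemma preEnt_shiftMap_eq_of_tendsto {s c : ℝ}
    (hc : ∀ M : ℕ, Tendsto (fun n : ℕ => ((n : ℝ) ^ s)⁻¹ * ((n + M) * Real.log 2)) atTop (𝓝 c)) :
    preEnt shiftMap s = c := by
  rw [preEnt_eq_iSup_limsup]
  refine le_antisymm (iSup₂_le fun ε hε => ?_) ?_
  · obtain ⟨M, hM⟩ := exists_pow_lt_of_lt_one hε (by norm_num : (1 / 2 : ℝ) < 1)
    exact limsup_inv_rpow_mul_log_le (preSepSup_shiftMap_le hM.le) (hc M)
  · refine le_iSup₂_of_le (1 / 2) (by norm_num) (le_trans ?_ liminf_le_limsup)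
    refine le_liminf_inv_rpow_mul_log (two_pow_le_preSepSup_shiftMap (by norm_num)) ?_
    simpa using EReal.tendsto_coe.mpr (hc 0)

lemma preDim_eq_ofReal [PseudoMetricSpace X] {T : X → X} {d : ℝ} (hd : 0 ≤ d)
    (hle : ∀ s, 0 < s → s ≤ d → preEnt T s ≠ 0) (hgt : ∀ s, d < s → preEnt T s = 0) :
    preDim T = ENNReal.ofReal d := by
  refine le_antisymm (ENNReal.le_of_forall_pos_le_add fun δ hδ _ => ?_) ?_
  · have hs : d < d + δ := lt_add_of_pos_right d hδ
    calc preDim T ≤ ENNReal.ofReal (d + δ) :=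
          iInf₂_le (f := fun (s : ℝ) (_ : 0 < s ∧ preEnt T s = 0) => ENNReal.ofReal s) _
            ⟨by positivity, hgt _ hs⟩
      _ = ENNReal.ofReal d + δ := by rw [ENNReal.ofReal_add hd δ.coe_nonneg, ENNReal.ofReal_coe_nnreal]
  · refine le_iInf₂ fun s hs => ENNReal.ofReal_le_ofReal ?_
    by_contra! hsd
    exact hle s hs.1 hsd.le hs.2

theorem preDim_shift :
    (∀ s : ℝ, 0 < s → s < 1 → preEnt shiftMap s = ⊤) ∧
    preEnt shiftMap 1 = ((Real.log 2 : ℝ) : EReal) ∧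
    (∀ s : ℝ, 1 < s → preEnt shiftMap s = 0) ∧
    preDim shiftMap = 1 := by
  have hone : preEnt shiftMap 1 = ((Real.log 2 : ℝ) : EReal) :=
    preEnt_shiftMap_eq_of_tendsto tendsto_inv_rpow_one_mul_add
  have hgt : ∀ s : ℝ, 1 < s → preEnt shiftMap s = 0 := fun s hs => by
    simpa using preEnt_shiftMap_eq_of_tendsto (tendsto_inv_rpow_mul_add_of_one_lt hs)
  refine ⟨fun s _ hs => preEnt_shiftMap_of_lt_one hs, hone, hgt, ?_⟩
  rw [← ENNReal.ofReal_one]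
  refine preDim_eq_ofReal zero_le_one (fun s _ hs => ?_) hgt
  rcases hs.lt_or_eq with hs | rfl
  · simp [preEnt_shiftMap_of_lt_one hs]
  · simpa [hone] using (Real.log_pos one_lt_two).ne'
end

section
/- For every s > 0 and every m ∈ ℕ, the s-preimage entropy satisfies D_pre(s,T^m) ≤ m^s · D_pre(s,T). -/
/-!
An `(n, ε)`-separated set for `T^m` is `(mn, ε)`-separated for `T`, because the Bowen distance of
`T^m` at time `n` only looks at the times `0, m, …, m(n-1)` of `T`; and `(T^m)^{-k}(x) = T^{-mk}(x)`
with `mk ≥ mn` whenever `k ≥ n`. So the count at time `n` for `T^m` is bounded by the count at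
time `mn` for `T`. Since `n^s = (mn)^s / m^s`, the normalised rates satisfy
`rate_{T^m}(n) ≤ m^s · rate_T(mn)`, and the limsup along the subsequence `mn` is at most the full
limsup.
-/

open Filter Set
open scoped ENNReal

variable {X : Type*}

section Iterate

variable [PseudoMetricSpace X] {T : X → X} {m : ℕ}

lemma bowenDist_nonneg (n : ℕ) (x y : X) : 0 ≤ bowenDist T n x y :=
  Real.iSup_nonneg fun _ => dist_nonneg

lemma dist_iterate_le_bowenDist {n j : ℕ} (hj : j < n) (x y : X) :
    dist (T^[j] x) (T^[j] y) ≤ bowenDist T n x y :=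
  le_ciSup (f := fun i : Fin n => dist (T^[(i : ℕ)] x) (T^[(i : ℕ)] y))
    (Set.finite_range _).bddAbove ⟨j, hj⟩

lemma bowenDist_iterate_le (hm : 0 < m) (n : ℕ) (x y : X) :
    bowenDist (T^[m]) n x y ≤ bowenDist T (m * n) x y := by
  refine Real.iSup_le (fun j => ?_) (bowenDist_nonneg _ x y)
  rw [← Function.iterate_mul]
  exact dist_iterate_le_bowenDist (Nat.mul_lt_mul_of_pos_left j.isLt hm) x y

lemma IsPreSeparated.of_iterate {n : ℕ} {ε : ℝ} {K E : Set X} (hm : 0 < m)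
    (hE : IsPreSeparated (T^[m]) n ε K E) : IsPreSeparated T (m * n) ε K E :=
  ⟨hE.1, fun x hx y hy hxy => (hE.2 x hx y hy hxy).trans_le (bowenDist_iterate_le hm n x y)⟩

lemma sepMax_iterate_le (hm : 0 < m) (n : ℕ) (ε : ℝ) (K : Set X) :
    sepMax (T^[m]) n ε K ≤ sepMax T (m * n) ε K :=
  iSup₂_le fun E hE => le_iSup₂_of_le E (hE.of_iterate hm) le_rfl

noncomputable def preimageSepMax (T : X → X) (n : ℕ) (ε : ℝ) : ℝ≥0∞ :=
  ⨆ (x : X) (k : ℕ) (_ : n ≤ k), sepMax T n ε (T^[k] ⁻¹' {x})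

noncomputable def preSepRate (T : X → X) (s ε : ℝ) (n : ℕ) : EReal :=
  (((n : ℝ) ^ s)⁻¹ : ℝ) * ENNReal.log (preimageSepMax T n ε)

lemma preEnt_eq_iSup_limsup_preSepRate (T : X → X) (s : ℝ) :
    preEnt T s = ⨆ (ε : ℝ) (_ : 0 < ε), atTop.limsup (preSepRate T s ε) :=
  rfl

lemma preimageSepMax_iterate_le (hm : 0 < m) (n : ℕ) (ε : ℝ) :
    preimageSepMax (T^[m]) n ε ≤ preimageSepMax T (m * n) ε :=
  iSup₂_le fun x k => iSup_le fun hk => by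
    rw [← Function.iterate_mul]
    exact (sepMax_iterate_le hm n ε _).trans <|
      le_iSup₂_of_le x (m * k) <| le_iSup_of_le (Nat.mul_le_mul_left m hk) le_rfl

lemma preSepRate_iterate_le (hm : 0 < m) (s ε : ℝ) (n : ℕ) :
    preSepRate (T^[m]) s ε n ≤ (((m : ℝ) ^ s : ℝ) : EReal) * preSepRate T s ε (m * n) := by
  have hcoeff : (m : ℝ) ^ s * (((m * n : ℕ) : ℝ) ^ s)⁻¹ = ((n : ℝ) ^ s)⁻¹ := by
    rw [Nat.cast_mul, Real.mul_rpow (by positivity) (by positivity), mul_inv,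
      mul_inv_cancel_left₀ (by positivity)]
  rw [preSepRate, preSepRate, ← mul_assoc, ← EReal.coe_mul, hcoeff]
  exact mul_le_mul_of_nonneg_left (ENNReal.log_monotone (preimageSepMax_iterate_le hm n ε))
    (EReal.coe_nonneg.mpr (by positivity))

end Iterate

theorem preEnt_iterate_le_general {X : Type*} [MetricSpace X]
    {T : X → X} (s : ℝ) (m : ℕ) (hm : 0 < m) :
    preEnt (T^[m]) s ≤ ((((m : ℝ) ^ s : ℝ)) : EReal) * preEnt T s := by
  set C : EReal := (((m : ℝ) ^ s : ℝ) : EReal)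
  have hC : 0 ≤ C := EReal.coe_nonneg.mpr (by positivity)
  have hmul : Tendsto (m * ·) atTop atTop :=
    tendsto_atTop_mono (fun n => Nat.le_mul_of_pos_left n hm) tendsto_id
  rw [preEnt_eq_iSup_limsup_preSepRate, preEnt_eq_iSup_limsup_preSepRate]
  refine iSup₂_le fun ε hε => ?_
  calc atTop.limsup (preSepRate (T^[m]) s ε)
      ≤ atTop.limsup fun n => C * preSepRate T s ε (m * n) :=
        limsup_le_limsup (.of_forall fun n => preSepRate_iterate_le hm s ε n)
    _ ≤ atTop.limsup fun N => C * preSepRate T s ε N :=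
        hmul.limsup_comp_le_limsup (u := fun N => C * preSepRate T s ε N)
    _ = C * atTop.limsup (preSepRate T s ε) :=
        EReal.limsup_const_mul_of_nonneg_of_ne_top hC (EReal.coe_ne_top _)
    _ ≤ C * ⨆ (ε : ℝ) (_ : 0 < ε), atTop.limsup (preSepRate T s ε) :=
        mul_le_mul_of_nonneg_left (le_iSup₂_of_le ε hε le_rfl) hC

theorem preEnt_iterate_le {X : Type*} [MetricSpace X] [CompactSpace X]
    {T : X → X} (hT : Continuous T) (s : ℝ) (hs : 0 < s) (m : ℕ) (hm : 0 < m) :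
    preEnt (T^[m]) s ≤ ((((m : ℝ) ^ s : ℝ)) : EReal) * preEnt T s :=
  preEnt_iterate_le_general s m hm
end

section
/- Topologically conjugate systems have equal s-preimage entropy: if π : X → Y is a homeomorphism with π ∘ T₁ = T₂ ∘ π, then D_pre(s,T₁) = D_pre(s,T₂) for all s > 0, and hence D_pre(T₁) = D_pre(T₂). -/
/-!
A conjugacy `e` carries the fibre `T₁^[k] ⁻¹' {x}` onto `T₂^[k] ⁻¹' {e x}`, and if `e` is
uniformly continuous, `(n, ε)`-separation for `T₂` pulls back along `e` to `(n, δ)`-separation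
for `T₁`. Hence `r(n, ε, ·, T₂) ≤ r(n, δ, ·, T₁)` fibrewise and `D_pre(s, T₂) ≤ D_pre(s, T₁)`.
On compact spaces a homeomorphism and its inverse are both uniformly continuous.
-/

open Filter Set
open scoped ENNReal

variable {X : Type*}

open Function

section Conjugacy

variable {Y : Type*} [PseudoMetricSpace X] [PseudoMetricSpace Y] {T : X → X}
  {T₁ : X → X} {T₂ : Y → Y}

theorem lt_bowenDist_iff {n : ℕ} {ε : ℝ} {x y : X} (hε : 0 ≤ ε) :
    ε < bowenDist T n x y ↔ ∃ j < n, ε < dist (T^[j] x) (T^[j] y) := by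
  rcases Nat.eq_zero_or_pos n with rfl | hn
  · simp [bowenDist, Real.iSup_of_isEmpty, hε.not_gt]
  · have : Nonempty (Fin n) := ⟨⟨0, hn⟩⟩
    rw [bowenDist, lt_ciSup_iff (Set.finite_range _).bddAbove]
    exact ⟨fun ⟨j, hj⟩ => ⟨j, j.isLt, hj⟩, fun ⟨j, hjn, hj⟩ => ⟨⟨j, hjn⟩, hj⟩⟩

theorem UniformContinuous.exists_lt_bowenDist_of_semiconj {f : X → Y}
    (hf : UniformContinuous f) (hconj : Semiconj f T₁ T₂) {ε : ℝ} (hε : 0 < ε) :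
    ∃ δ > 0, ∀ (n : ℕ) (a b : X), ε < bowenDist T₂ n (f a) (f b) → δ < bowenDist T₁ n a b := by
  obtain ⟨δ, hδ, hf⟩ := Metric.uniformContinuous_iff.mp hf ε hε
  refine ⟨δ / 2, half_pos hδ, fun n a b hab => ?_⟩
  obtain ⟨j, hjn, hj⟩ := (lt_bowenDist_iff hε.le).mp hab
  rw [← (hconj.iterate_right j).eq, ← (hconj.iterate_right j).eq] at hj
  have hδj : δ ≤ dist (T₁^[j] a) (T₁^[j] b) := not_lt.mp fun h => (hf h).not_gt hj
  exact (lt_bowenDist_iff (half_pos hδ).le).mpr ⟨j, hjn, by linarith⟩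

theorem sepMax_preimage_iterate_le_of_semiconj (e : X ≃ Y) (hconj : Semiconj e T₁ T₂)
    {n k : ℕ} {ε δ : ℝ}
    (hsep : ∀ a b : X, ε < bowenDist T₂ n (e a) (e b) → δ < bowenDist T₁ n a b) (x : X) :
    sepMax T₂ n ε (T₂^[k] ⁻¹' {e x}) ≤ sepMax T₁ n δ (T₁^[k] ⁻¹' {x}) := by
  classical
  have hconj' : Semiconj e.symm T₂ T₁ := hconj.inverse_left e.left_inv e.right_inv
  refine iSup₂_le fun E hE => le_iSup₂_of_le (E.image e.symm) ?_ ?_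
  · rw [IsPreSeparated, Finset.coe_image]
    refine ⟨?_, ?_⟩
    · rintro _ ⟨b, hb, rfl⟩
      have hb : T₂^[k] b = e x := hE.1 hb
      change T₁^[k] (e.symm b) = x
      rw [← (hconj'.iterate_right k).eq, hb, e.symm_apply_apply]
    · rintro _ ⟨a, ha, rfl⟩ _ ⟨b, hb, rfl⟩ hab
      refine hsep _ _ ?_
      rw [e.apply_symm_apply, e.apply_symm_apply]
      exact hE.2 a ha b hb (ne_of_apply_ne _ hab)
  · rw [Finset.card_image_of_injective _ e.symm.injective]

theorem preEnt_le_of_semiconj (e : X ≃ Y) (he : UniformContinuous e)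
    (hconj : Semiconj e T₁ T₂) (s : ℝ) : preEnt T₂ s ≤ preEnt T₁ s := by
  refine iSup₂_le fun ε hε => ?_
  obtain ⟨δ, hδ, hsep⟩ := he.exists_lt_bowenDist_of_semiconj hconj hε
  refine le_iSup₂_of_le δ hδ (limsup_le_limsup (Eventually.of_forall fun n => ?_))
  have hcoeff : (0 : EReal) ≤ ((((n : ℝ) ^ s)⁻¹ : ℝ) : EReal) := by
    exact_mod_cast inv_nonneg.mpr (Real.rpow_nonneg n.cast_nonneg s)
  refine mul_le_mul_of_nonneg_left (ENNReal.log_le_log_iff.mpr ?_) hcoeff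
  rw [← e.iSup_comp]
  exact iSup_mono fun x => iSup₂_mono fun k _ =>
    sepMax_preimage_iterate_le_of_semiconj e hconj (hsep n) x

theorem preEnt_eq_of_homeomorph [CompactSpace X] [CompactSpace Y] (π : X ≃ₜ Y)
    (hconj : Semiconj π T₁ T₂) (s : ℝ) : preEnt T₁ s = preEnt T₂ s :=
  le_antisymm
    (preEnt_le_of_semiconj π.symm.toEquiv
      (CompactSpace.uniformContinuous_of_continuous π.symm.continuous)
      (hconj.inverse_left π.left_inv π.right_inv) s)
    (preEnt_le_of_semiconj π.toEquiv
      (CompactSpace.uniformContinuous_of_continuous π.continuous) hconj s)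

end Conjugacy

theorem preEnt_of_conjugacy_general {X Y : Type*} [MetricSpace X] [CompactSpace X]
    [MetricSpace Y] [CompactSpace Y] {T₁ : X → X} {T₂ : Y → Y}
    (π : X ≃ₜ Y) (hconj : ∀ x : X, π (T₁ x) = T₂ (π x)) :
    (∀ s : ℝ, 0 < s → preEnt T₁ s = preEnt T₂ s) ∧ preDim T₁ = preDim T₂ := by
  have heq : ∀ s, preEnt T₁ s = preEnt T₂ s := preEnt_eq_of_homeomorph π hconj
  refine ⟨fun s _ => heq s, ?_⟩
  simp only [preDim, heq]

theorem preEnt_of_conjugacy {X Y : Type*} [MetricSpace X] [CompactSpace X]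
    [MetricSpace Y] [CompactSpace Y] {T₁ : X → X} {T₂ : Y → Y}
    (hT₁ : Continuous T₁) (hT₂ : Continuous T₂)
    (π : X ≃ₜ Y) (hconj : ∀ x : X, π (T₁ x) = T₂ (π x)) :
    (∀ s : ℝ, 0 < s → preEnt T₁ s = preEnt T₂ s) ∧ preDim T₁ = preDim T₂ :=
  preEnt_of_conjugacy_general π hconj
end
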